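/- arXiv:1511.08552 — 4 statements merged into one kernel-verified Lean document; each statement's English description precedes it below -/
import Mathlib

section
/- The exponential mechanism is (ε,0)-differentially private: sampling an output f ∈ F with probability proportional to exp(ε·q(S,f)/(2Δq)) satisfies (ε,0)-differential privacy, where Δq is the sensitivity of q. -/
/-- Two databases are neighboring if they differ in at most one entry. -/
def NeighboringDB {X : Type*} {n : ℕ} (S S' : Fin n → X) : Prop :=
  ∃ i₀ : Fin n, ∀ i : Fin n, i ≠ i₀ → S i = S' i

/-! The weight `exp (ε q(S, g) / 2Δ)` of every output changes by a factor of at most `e^{ε/2}`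
between neighbouring databases, hence so does the normalising sum, and the two factors multiply
to `e^ε` in the normalised probability. -/

theorem NeighboringDB.symm {X : Type*} {n : ℕ} {S S' : Fin n → X} (h : NeighboringDB S S') :
    NeighboringDB S' S :=
  let ⟨i₀, hi₀⟩ := h
  ⟨i₀, fun i hi => (hi₀ i hi).symm⟩

theorem div_sum_le_mul_mul_div_sum {ι : Type*} [Fintype ι] {w w' : ι → ℝ} {a b : ℝ}
    (hw : ∀ i, 0 < w i) (hw' : ∀ i, 0 < w' i)
    (hle : ∀ i, w i ≤ a * w' i) (hle' : ∀ i, w' i ≤ b * w i) (i : ι) :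
    w i / ∑ j, w j ≤ a * b * (w' i / ∑ j, w' j) := by
  have hne : (Finset.univ : Finset ι).Nonempty := ⟨i, Finset.mem_univ i⟩
  have hsum : 0 < ∑ j, w j := Finset.sum_pos (fun j _ => hw j) hne
  have hsum' : 0 < ∑ j, w' j := Finset.sum_pos (fun j _ => hw' j) hne
  have hsum_le : ∑ j, w' j ≤ b * ∑ j, w j := by
    rw [Finset.mul_sum]
    exact Finset.sum_le_sum fun j _ => hle' j
  rw [mul_div_assoc', div_le_div_iff₀ hsum hsum']
  calc w i * ∑ j, w' j ≤ (a * w' i) * (b * ∑ j, w j) :=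
        mul_le_mul (hle i) hsum_le hsum'.le ((hw i).le.trans (hle i))
    _ = a * b * w' i * ∑ j, w j := by ring

theorem exp_mul_div_le_exp_half_mul {ε Δ x y : ℝ} (hε : 0 ≤ ε) (hΔ : 0 < Δ) (h : x - y ≤ Δ) :
    Real.exp (ε * x / (2 * Δ)) ≤ Real.exp (ε / 2) * Real.exp (ε * y / (2 * Δ)) := by
  rw [← Real.exp_add, Real.exp_le_exp]
  have : ε * (x - y) / (2 * Δ) ≤ ε / 2 := by
    rw [div_le_div_iff₀ (by positivity) two_pos]
    nlinarith
  rw [mul_sub, sub_div] at this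
  linarith

theorem exponential_mechanism_private_general {X F : Type*} [Fintype F] {n : ℕ}
    (q : (Fin n → X) → F → ℝ) (ε Δ : ℝ) (hε : 0 ≤ ε) (hΔ : 0 < Δ)
    (hsens : ∀ f : F, ∀ S S' : Fin n → X, NeighboringDB S S' →
      |q S f - q S' f| ≤ Δ) :
    ∀ S S' : Fin n → X, NeighboringDB S S' → ∀ f : F,
      Real.exp (ε * q S f / (2 * Δ)) / (∑ g : F, Real.exp (ε * q S g / (2 * Δ))) ≤
        Real.exp ε *
          (Real.exp (ε * q S' f / (2 * Δ)) /
            (∑ g : F, Real.exp (ε * q S' g / (2 * Δ)))) := by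
  intro S S' hN f
  have hratio := div_sum_le_mul_mul_div_sum
    (w := fun g => Real.exp (ε * q S g / (2 * Δ)))
    (w' := fun g => Real.exp (ε * q S' g / (2 * Δ)))
    (fun _ => Real.exp_pos _) (fun _ => Real.exp_pos _)
    (fun g => exp_mul_div_le_exp_half_mul hε hΔ (abs_le.mp (hsens g S S' hN)).2)
    (fun g => exp_mul_div_le_exp_half_mul hε hΔ (abs_le.mp (hsens g S' S hN.symm)).2) f
  rwa [← Real.exp_add, add_halves] at hratio

/-- The exponential mechanism is `(ε,0)`-differentially private: if the quality
function `q` has sensitivity at most `Δ`, then for all neighboring databases `S, S'`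
and every output `f`, the probability that the exponential mechanism outputs `f` on
input `S` is at most `e^ε` times the probability that it outputs `f` on input `S'`. -/
theorem exponential_mechanism_private {X F : Type*} [Fintype F] [Nonempty F] {n : ℕ}
    (q : (Fin n → X) → F → ℝ) (ε Δ : ℝ) (hε : 0 ≤ ε) (hΔ : 0 < Δ)
    (hsens : ∀ f : F, ∀ S S' : Fin n → X, NeighboringDB S S' →
      |q S f - q S' f| ≤ Δ) :
    ∀ S S' : Fin n → X, NeighboringDB S S' → ∀ f : F,
      Real.exp (ε * q S f / (2 * Δ)) / (∑ g : F, Real.exp (ε * q S g / (2 * Δ))) ≤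
        Real.exp ε *
          (Real.exp (ε * q S' f / (2 * Δ)) /
            (∑ g : F, Real.exp (ε * q S' g / (2 * Δ)))) :=
  exponential_mechanism_private_general q ε Δ hε hΔ hsens
end

section
/- Packing lower bound: if M : X^n → Y is (ε,0)-differentially private, and there exist N databases S_1,…,S_N ∈ X^n (each pair differing in at most n entries) and disjoint events T_1,…,T_N ⊆ Y such that Pr[M(S_i) ∈ T_i] ≥ 1/2 for all i, then n ≥ ln(N)/ε − ln(2)/ε. -/
/-!
Group privacy: changing the database one coordinate at a time shows that
`Pr[M(S) ∈ T] ≤ e^{εn} Pr[M(S') ∈ T]` for any two databases of size `n`. Comparing every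
`M(S_i)` with a single `M(S_{i₀})`, the disjoint events `T_i` each carry mass at least
`e^{-εn}/2` under one distribution, so `N e^{-εn}/2 ≤ 1`; take logarithms.
-/

open scoped ENNReal

theorem PMF.sum_toOuterMeasure_le_one {Y ι : Type*} [Fintype ι] (p : PMF Y) {T : ι → Set Y}
    (hT : Pairwise (Function.onFun Disjoint T)) : ∑ i, p.toOuterMeasure (T i) ≤ 1 := by
  let _ : MeasurableSpace Y := ⊤
  calc ∑ i, p.toOuterMeasure (T i) = p.toMeasure (⋃ i, T i) := by
        rw [MeasureTheory.measure_iUnion hT fun _ => trivial, tsum_fintype]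
        simp only [p.toMeasure_apply_eq_toOuterMeasure]
    _ ≤ 1 := MeasureTheory.prob_le_one

/-- `(log c, 0)`-differential privacy, with the privacy loss `e^ε` written as the factor `c`. -/
def IsPureDP {ι X Y : Type*} (M : (ι → X) → PMF Y) (c : ℝ≥0∞) : Prop :=
  ∀ S S' : ι → X, (∃ i₀ : ι, ∀ i : ι, i ≠ i₀ → S i = S' i) →
    ∀ T : Set Y, (M S).toOuterMeasure T ≤ c * (M S').toOuterMeasure T

namespace IsPureDP

variable {ι X Y : Type*} {M : (ι → X) → PMF Y} {c : ℝ≥0∞}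

theorem toOuterMeasure_le_pow_card_mul [DecidableEq ι] (hM : IsPureDP M c) (s : Finset ι)
    {A B : ι → X} (hAB : ∀ i ∉ s, A i = B i) (T : Set Y) :
    (M A).toOuterMeasure T ≤ c ^ s.card * (M B).toOuterMeasure T := by
  induction s using Finset.induction_on generalizing A with
  | empty =>
    obtain rfl : A = B := funext fun i => hAB i (Finset.notMem_empty i)
    simp
  | insert a s ha ih =>
    set A' := Function.update A a (B a)
    have hA'_near : ∀ i, i ≠ a → A i = A' i := fun i hi => (Function.update_of_ne hi _ _).symm
    have hA'_far : ∀ i ∉ s, A' i = B i := by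
      intro i hi
      rcases eq_or_ne i a with rfl | hia
      · simp [A']
      · exact (Function.update_of_ne hia _ _).trans (hAB i (by simp [hia, hi]))
    calc (M A).toOuterMeasure T
        ≤ c * (M A').toOuterMeasure T := hM _ _ ⟨a, hA'_near⟩ T
      _ ≤ c * (c ^ s.card * (M B).toOuterMeasure T) := by gcongr; exact ih hA'_far
      _ = c ^ (insert a s).card * (M B).toOuterMeasure T := by
        rw [Finset.card_insert_of_notMem ha, pow_succ', mul_assoc]

theorem toOuterMeasure_le_pow_mul [Fintype ι] (hM : IsPureDP M c) (A B : ι → X) (T : Set Y) :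
    (M A).toOuterMeasure T ≤ c ^ Fintype.card ι * (M B).toOuterMeasure T := by
  classical
  exact hM.toOuterMeasure_le_pow_card_mul Finset.univ (by simp) T

theorem card_mul_le_pow_of_packing [Fintype ι] {κ : Type*} [Fintype κ] (hM : IsPureDP M c)
    (S : κ → ι → X) {T : κ → Set Y} (hT : Pairwise (Function.onFun Disjoint T)) {a : ℝ≥0∞}
    (ha : ∀ k, a ≤ (M (S k)).toOuterMeasure (T k)) :
    Fintype.card κ * a ≤ c ^ Fintype.card ι := by
  cases isEmpty_or_nonempty κ with
  | inl _ => simp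
  | inr h =>
    obtain ⟨k₀⟩ := h
    calc (Fintype.card κ : ℝ≥0∞) * a = ∑ k, a := by simp
      _ ≤ ∑ k, c ^ Fintype.card ι * (M (S k₀)).toOuterMeasure (T k) :=
        Finset.sum_le_sum fun k _ => (ha k).trans (hM.toOuterMeasure_le_pow_mul _ _ _)
      _ ≤ c ^ Fintype.card ι := by
        rw [← Finset.mul_sum]
        exact mul_le_of_le_one_right' ((M (S k₀)).sum_toOuterMeasure_le_one hT)

end IsPureDP

theorem Real.log_sub_log_two_le {N t : ℝ} (hN : 0 ≤ N) (ht : 0 ≤ t) (h : N / 2 ≤ Real.exp t) :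
    Real.log N - Real.log 2 ≤ t := by
  rcases hN.eq_or_lt with rfl | hN
  · simpa using ht.trans' (neg_nonpos.mpr (Real.log_nonneg one_le_two))
  · rw [← Real.log_div hN.ne' two_ne_zero, Real.log_le_iff_le_exp (by positivity)]
    exact h

/-- Packing lower bound: if `M` is `(ε,0)`-differentially private and there are `N`
databases of size `n` together with pairwise disjoint events `T i` such that
`Pr[M(S_i) ∈ T_i] ≥ 1/2` for all `i`, then `n ≥ ln(N)/ε − ln(2)/ε`. -/
theorem packing_lower_bound {X Y : Type*} {n N : ℕ}
    (M : (Fin n → X) → PMF Y) (ε : ℝ) (hε : 0 < ε)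
    (hDP : ∀ S S' : Fin n → X, (∃ i₀ : Fin n, ∀ i : Fin n, i ≠ i₀ → S i = S' i) →
      ∀ T : Set Y,
        (M S).toOuterMeasure T ≤ ENNReal.ofReal (Real.exp ε) * (M S').toOuterMeasure T)
    (S : Fin N → Fin n → X) (T : Fin N → Set Y)
    (hdisj : Pairwise (Function.onFun Disjoint T))
    (hacc : ∀ i : Fin N, (1 : ENNReal) / 2 ≤ (M (S i)).toOuterMeasure (T i)) :
    Real.log N / ε - Real.log 2 / ε ≤ (n : ℝ) := by
  have hpack := IsPureDP.card_mul_le_pow_of_packing hDP S hdisj hacc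
  rw [Fintype.card_fin, Fintype.card_fin, ← ENNReal.ofReal_pow (Real.exp_pos ε).le,
    ← Real.exp_nat_mul, ← ENNReal.ofReal_natCast, one_div, ← ENNReal.ofReal_ofNat 2,
    ← ENNReal.ofReal_inv_of_pos two_pos, ← ENNReal.ofReal_mul (by positivity),
    ENNReal.ofReal_le_ofReal_iff (by positivity), ← div_eq_mul_inv] at hpack
  rw [← sub_div, div_le_iff₀ hε]
  exact Real.log_sub_log_two_le N.cast_nonneg (by positivity) hpack
end

section
/- The Laplace mechanism is (ε,0)-differentially private: if f : X^n → ℝ has sensitivity Δ (i.e., |f(S)−f(S')| ≤ Δ for all neighboring S,S'), then the mechanism M(S) = f(S) + Lap(Δ/ε) is (ε,0)-differentially private. -/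
/-!
Shifting the Laplace distribution by `c` turns its density into `x ↦ exp(-|x - c|/λ)/(2λ)`.
By the triangle inequality the densities for two centres `a`, `b` differ pointwise by a factor
at most `exp(|a - b|/λ)`, and for `λ = Δ/ε` and `|a - b| ≤ Δ` this factor is at most `e^ε`.
-/

open MeasureTheory

/-- The Laplace distribution with scale `λ`, given by density `(1/(2λ))·exp(−|z|/λ)`
with respect to Lebesgue measure. -/
noncomputable def laplaceMeasure (lam : ℝ) : Measure ℝ :=
  (volume : Measure ℝ).withDensity
    (fun z => ENNReal.ofReal ((1 / (2 * lam)) * Real.exp (-|z| / lam)))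

theorem map_const_add_withDensity {G : Type*} [MeasurableSpace G] [AddGroup G]
    [MeasurableAdd G] (μ : Measure G) [μ.IsAddLeftInvariant] (f : G → ENNReal) (c : G) :
    (μ.withDensity f).map (c + ·) = μ.withDensity (fun x => f (-c + x)) := by
  ext s hs
  rw [Measure.map_apply (measurable_const_add c) hs, withDensity_apply _ hs,
    withDensity_apply _ (measurable_const_add c hs),
    ← (measurePreserving_add_left μ c).setLIntegral_comp_preimage_emb
      (MeasurableEquiv.addLeft c).measurableEmbedding (fun x => f (-c + x))]
  simp only [neg_add_cancel_left]

theorem exp_neg_abs_sub_div_le {lam : ℝ} (hlam : 0 ≤ lam) (x a b : ℝ) :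
    Real.exp (-|x - a| / lam) ≤ Real.exp (|a - b| / lam) * Real.exp (-|x - b| / lam) := by
  rw [← Real.exp_add, Real.exp_le_exp, ← add_div]
  exact div_le_div_of_nonneg_right (by linarith [abs_sub_le x a b]) hlam

theorem map_const_add_laplaceMeasure (lam c : ℝ) :
    (laplaceMeasure lam).map (c + ·) = volume.withDensity
      (fun x => ENNReal.ofReal (1 / (2 * lam) * Real.exp (-|x - c| / lam))) := by
  simp only [laplaceMeasure, map_const_add_withDensity, neg_add_eq_sub]

theorem map_const_add_laplaceMeasure_le {lam : ℝ} (hlam : 0 ≤ lam) (a b : ℝ) :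
    (laplaceMeasure lam).map (a + ·) ≤
      ENNReal.ofReal (Real.exp (|a - b| / lam)) • (laplaceMeasure lam).map (b + ·) := by
  rw [map_const_add_laplaceMeasure, map_const_add_laplaceMeasure,
    ← withDensity_smul' _ _ ENNReal.ofReal_ne_top]
  refine withDensity_mono (Filter.Eventually.of_forall fun x => ?_)
  rw [Pi.smul_apply, smul_eq_mul, ← ENNReal.ofReal_mul (Real.exp_nonneg _), mul_left_comm]
  exact ENNReal.ofReal_le_ofReal
    (mul_le_mul_of_nonneg_left (exp_neg_abs_sub_div_le hlam x a b) (by positivity))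

/-- The Laplace mechanism is `(ε,0)`-differentially private: if `f` has sensitivity
`Δ`, then releasing `f(S) + Lap(Δ/ε)` satisfies, for all neighboring databases and
all measurable events `T`, `Pr[M(S) ∈ T] ≤ e^ε · Pr[M(S') ∈ T]`. -/
theorem laplace_mechanism_private {X : Type*} {n : ℕ}
    (f : (Fin n → X) → ℝ) (ε Δ : ℝ) (hε : 0 < ε) (hΔ : 0 < Δ)
    (hsens : ∀ S S' : Fin n → X,
      (∃ i₀ : Fin n, ∀ i : Fin n, i ≠ i₀ → S i = S' i) → |f S - f S'| ≤ Δ) :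
    ∀ S S' : Fin n → X, (∃ i₀ : Fin n, ∀ i : Fin n, i ≠ i₀ → S i = S' i) →
      ∀ T : Set ℝ, MeasurableSet T →
        Measure.map (fun z => f S + z) (laplaceMeasure (Δ / ε)) T ≤
          ENNReal.ofReal (Real.exp ε) *
            Measure.map (fun z => f S' + z) (laplaceMeasure (Δ / ε)) T := by
  intro S S' hneighbors T _
  have hscale : 0 < Δ / ε := div_pos hΔ hε
  have hprivacy_loss : |f S - f S'| / (Δ / ε) ≤ ε := by
    rw [div_le_iff₀ hscale, mul_div_cancel₀ _ hε.ne']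
    exact hsens S S' hneighbors
  calc Measure.map (fun z => f S + z) (laplaceMeasure (Δ / ε)) T
      ≤ ENNReal.ofReal (Real.exp (|f S - f S'| / (Δ / ε))) *
          Measure.map (fun z => f S' + z) (laplaceMeasure (Δ / ε)) T :=
        map_const_add_laplaceMeasure_le hscale.le _ _ T
    _ ≤ ENNReal.ofReal (Real.exp ε) *
          Measure.map (fun z => f S' + z) (laplaceMeasure (Δ / ε)) T := by gcongr
end

section
/- Accuracy of the point-function sanitizer: the per-query Laplace-with-thresholding mechanism of Algorithm 1 is α-accurate for all point queries simultaneously with probability at least 1−β, provided n ≥ (4/(αε))·ln(4/(αβ)). That is, with probability ≥ 1−β, every released answer a_x satisfies |a_x − c_x(D)| ≤ α. -/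
open MeasureTheory

/-- The empirical frequency of the point `x` in the database `D`. -/
noncomputable def pointFreq {X : Type*} [Fintype X] [DecidableEq X] {n : ℕ}
    (D : Fin n → X) (x : X) : ℝ :=
  ((Finset.univ.filter (fun i => D i = x)).card : ℝ) / n

/-- The released answer of the thresholded-Laplace point sanitizer for query `x`,
given noise vector `ω`. -/
noncomputable def pointAnswer {X : Type*} [Fintype X] [DecidableEq X] {n : ℕ}
    (α : ℝ) (D : Fin n → X) (x : X) (ω : X → ℝ) : ℝ :=
  if pointFreq D x ≤ α / 4 then 0
  else if pointFreq D x + ω x ≤ α / 2 then 0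
  else pointFreq D x + ω x


/-!
Only the points with `c_x(D) > α/4` receive noise, and there are at most `4/α` of them since
the frequencies sum to `1`. If each of their noises satisfies `|Lap| ≤ α/2`, every answer is
within `α` of the truth. By independence this happens with probability
`(1 - p)^m ≥ 1 - m p` (Bernoulli), where `p = exp(-(α/2)/λ) = exp(-αεn/4) ≤ αβ/4` is the
Laplace tail at `α/2` and `m ≤ 4/α`, so `m p ≤ β`.
-/

open Real Set

noncomputable def laplaceDensity (lam z : ℝ) : ENNReal :=
  ENNReal.ofReal (1 / (2 * lam) * exp (-|z| / lam))

lemma measurable_laplaceDensity (lam : ℝ) : Measurable (laplaceDensity lam) := by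
  unfold laplaceDensity; fun_prop

lemma laplaceMeasure_apply (lam : ℝ) {s : Set ℝ} (hs : MeasurableSet s) :
    laplaceMeasure lam s = ∫⁻ z in s, laplaceDensity lam z :=
  withDensity_apply _ hs

lemma setLIntegral_laplaceDensity_Ioi {lam t : ℝ} (hlam : 0 < lam) (ht : 0 ≤ t) :
    ∫⁻ z in Ioi t, laplaceDensity lam z = ENNReal.ofReal (exp (-t / lam) / 2) := by
  have hexp : ∀ z ∈ Ioi t,
      laplaceDensity lam z = ENNReal.ofReal (1 / (2 * lam) * exp (-lam⁻¹ * z)) := by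
    intro z hz
    rw [laplaceDensity, abs_of_pos (ht.trans_lt hz)]
    congr 3
    ring
  have hint : IntegrableOn (fun z => 1 / (2 * lam) * exp (-lam⁻¹ * z)) (Ioi t) :=
    (integrableOn_exp_mul_Ioi (by simpa using hlam) t).const_mul _
  rw [setLIntegral_congr_fun measurableSet_Ioi hexp,
    ← ofReal_integral_eq_lintegral_ofReal hint (ae_of_all _ fun z => by positivity),
    integral_const_mul, integral_exp_mul_Ioi (by simpa using hlam)]
  congr 1
  field_simp

lemma setLIntegral_laplaceDensity_Iio_neg {lam t : ℝ} (hlam : 0 < lam) (ht : 0 ≤ t) :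
    ∫⁻ z in Iio (-t), laplaceDensity lam z = ENNReal.ofReal (exp (-t / lam) / 2) := by
  have hsymm : laplaceDensity lam ∘ Neg.neg = laplaceDensity lam := by
    ext z; simp [laplaceDensity]
  rw [← (Measure.measurePreserving_neg volume).map_eq,
    setLIntegral_map measurableSet_Iio (measurable_laplaceDensity lam) measurable_neg,
    ← Function.comp_def, hsymm, Set.neg_preimage, Set.neg_Iio, neg_neg]
  exact setLIntegral_laplaceDensity_Ioi hlam ht

lemma laplaceMeasure_lt_abs {lam t : ℝ} (hlam : 0 < lam) (ht : 0 ≤ t) :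
    laplaceMeasure lam {z | t < |z|} = ENNReal.ofReal (exp (-t / lam)) := by
  have hsplit : {z : ℝ | t < |z|} = Ioi t ∪ Iio (-t) := by
    ext z; simp only [mem_ofPred_eq, lt_abs, mem_union, mem_Ioi, mem_Iio, lt_neg]
  have hdisj : Disjoint (Ioi t) (Iio (-t)) :=
    Set.disjoint_left.mpr fun z hz hz' => by simp only [mem_Ioi, mem_Iio] at hz hz'; linarith
  rw [hsplit, measure_union hdisj measurableSet_Iio,
    laplaceMeasure_apply _ measurableSet_Ioi, laplaceMeasure_apply _ measurableSet_Iio,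
    setLIntegral_laplaceDensity_Ioi hlam ht, setLIntegral_laplaceDensity_Iio_neg hlam ht,
    ← ENNReal.ofReal_add (by positivity) (by positivity), add_halves]

lemma isProbabilityMeasure_laplaceMeasure {lam : ℝ} (hlam : 0 < lam) :
    IsProbabilityMeasure (laplaceMeasure lam) := by
  constructor
  have hnonzero : univ \ {0} = {z : ℝ | 0 < |z|} := by ext z; simp
  have hnull : laplaceMeasure lam {0} = 0 :=
    withDensity_absolutelyContinuous _ _ (measure_singleton 0)
  rw [← measure_sdiff_null hnull, hnonzero, laplaceMeasure_lt_abs hlam le_rfl]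
  simp

lemma laplaceMeasure_abs_le {lam t : ℝ} (hlam : 0 < lam) (ht : 0 ≤ t) :
    laplaceMeasure lam {z | |z| ≤ t} = ENNReal.ofReal (1 - exp (-t / lam)) := by
  have := isProbabilityMeasure_laplaceMeasure hlam
  have hcompl : {z : ℝ | |z| ≤ t} = {z | t < |z|}ᶜ := by ext z; simp
  rw [hcompl, prob_compl_eq_one_sub (measurableSet_lt measurable_const measurable_abs),
    laplaceMeasure_lt_abs hlam ht, ENNReal.ofReal_sub _ (exp_nonneg _), ENNReal.ofReal_one]

open Finset

lemma Finset.card_filter_lt_mul_le_sum {ι : Type*} [Fintype ι] {f : ι → ℝ} (hf : ∀ i, 0 ≤ f i)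
    (t : ℝ) : (#{i | t < f i} : ℝ) * t ≤ ∑ i, f i := by
  rw [← nsmul_eq_mul]
  exact (card_nsmul_le_sum _ _ _ fun i hi => (mem_filter.mp hi).2.le).trans
    (sum_le_sum_of_subset_of_nonneg (subset_univ _) fun i _ _ => hf i)

section PointFreq

variable {X : Type*} [Fintype X] [DecidableEq X] {n : ℕ}

lemma pointFreq_nonneg (D : Fin n → X) (x : X) : 0 ≤ pointFreq D x := by
  unfold pointFreq; positivity

lemma sum_pointFreq (hn : n ≠ 0) (D : Fin n → X) : ∑ x, pointFreq D x = 1 := by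
  unfold pointFreq
  rw [← Finset.sum_div, ← Nat.cast_sum, ← Finset.card_eq_sum_card_fiberwise
      (fun i _ => Finset.mem_univ (D i)), Finset.card_univ, Fintype.card_fin,
    div_self (Nat.cast_ne_zero.mpr hn)]

lemma abs_pointAnswer_sub_le {α : ℝ} (D : Fin n → X) (x : X) (ω : X → ℝ)
    (hω : α / 4 < pointFreq D x → |ω x| ≤ α / 2) : |pointAnswer α D x ω - pointFreq D x| ≤ α := by
  have hc := pointFreq_nonneg D x
  unfold pointAnswer
  split_ifs with hlight hlow
  · rw [zero_sub, abs_neg, abs_of_nonneg hc]; linarith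
  · have hnoise := (abs_le.mp (hω (not_le.mp hlight))).1
    rw [zero_sub, abs_neg, abs_of_nonneg hc]; linarith
  · have hnoise := hω (not_le.mp hlight)
    rw [add_sub_cancel_left]; linarith [abs_nonneg (ω x)]

end PointFreq

lemma Measure.pi_setPi_finset {ι : Type*} [Fintype ι] [DecidableEq ι] {α : ι → Type*}
    [∀ i, MeasurableSpace (α i)] (μ : ∀ i, Measure (α i)) [∀ i, IsProbabilityMeasure (μ i)]
    (s : Finset ι) (t : ∀ i, Set (α i)) :
    Measure.pi μ ((s : Set ι).pi t) = ∏ i ∈ s, μ i (t i) := by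
  rw [← Set.pi_univ_ite, Measure.pi_pi, ← Fintype.prod_ite_mem s]
  refine prod_congr rfl fun i _ => ?_
  simp only [mem_coe]
  split_ifs <;> simp only [measure_univ]

lemma one_sub_le_one_sub_pow_of_mul_le {p β : ℝ} {m : ℕ} (hp : p ≤ 2) (hmp : m * p ≤ β) :
    1 - β ≤ (1 - p) ^ m := by
  have hbernoulli := one_add_mul_le_pow (a := -p) (by linarith) m
  rw [sub_eq_add_neg 1 p]
  linarith

lemma exp_neg_half_div_noiseScale_le {n α β ε : ℝ} (hn : 0 < n) (hα : 0 < α) (hβ : 0 < β)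
    (hε : 0 < ε) (hsamp : 4 / (α * ε) * log (4 / (α * β)) ≤ n) :
    exp (-(α / 2) / (2 / (ε * n))) ≤ α * β / 4 := by
  rw [div_mul_eq_mul_div, div_le_iff₀ (by positivity)] at hsamp
  calc exp (-(α / 2) / (2 / (ε * n))) = exp (-(α * ε * n / 4)) := by
        congr 1; field_simp; norm_num
    _ ≤ exp (-log (4 / (α * β))) := exp_le_exp.mpr (by linarith)
    _ = α * β / 4 := by rw [exp_neg, exp_log (by positivity), inv_div]

theorem point_sanitizer_accuracy_general {X : Type*} [Fintype X] [DecidableEq X] {n : ℕ}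
    (hn : 0 < n) (D : Fin n → X) (α β ε : ℝ)
    (hα : 0 < α) (hβ : 0 < β) (hε : 0 < ε)
    (hsamp : (4 / (α * ε)) * Real.log (4 / (α * β)) ≤ (n : ℝ)) :
    ENNReal.ofReal (1 - β) ≤
      Measure.pi (fun _ : X => laplaceMeasure (2 / (ε * n)))
        {ω : X → ℝ | ∀ x : X, |pointAnswer α D x ω - pointFreq D x| ≤ α} := by
  have hnR : (0 : ℝ) < n := Nat.cast_pos.mpr hn
  set lam := 2 / (ε * n)
  have hlam : 0 < lam := by positivity
  have := isProbabilityMeasure_laplaceMeasure hlam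
  set p := exp (-(α / 2) / lam)
  have hp : p ≤ α * β / 4 := exp_neg_half_div_noiseScale_le hnR hα hβ hε hsamp
  have hp1 : p ≤ 1 := exp_le_one_iff.mpr (div_nonpos_of_nonpos_of_nonneg (by linarith) hlam.le)
  set H := ({x | α / 4 < pointFreq D x} : Finset X)
  have hH : #H * (α / 4) ≤ 1 :=
    sum_pointFreq hn.ne' D ▸ card_filter_lt_mul_le_sum (pointFreq_nonneg D) _
  have hmp : #H * p ≤ β := by
    nlinarith [mul_le_mul_of_nonneg_left hp (Nat.cast_nonneg (α := ℝ) #H)]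
  calc ENNReal.ofReal (1 - β) ≤ ENNReal.ofReal (1 - p) ^ #H := by
        rw [← ENNReal.ofReal_pow (sub_nonneg.mpr hp1)]
        exact ENNReal.ofReal_le_ofReal (one_sub_le_one_sub_pow_of_mul_le (by linarith) hmp)
    _ = ∏ x ∈ H, laplaceMeasure lam {z | |z| ≤ α / 2} := by
        rw [prod_const, laplaceMeasure_abs_le hlam (by positivity)]
    _ = Measure.pi _ ((H : Set X).pi fun _ => {z | |z| ≤ α / 2}) :=
        (Measure.pi_setPi_finset _ _ _).symm
    _ ≤ _ := measure_mono fun ω hω x =>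
        abs_pointAnswer_sub_le D x ω fun hx => hω x (by simpa [H] using hx)

/-- Accuracy of the point-function sanitizer: if `n ≥ (4/(αε))·ln(4/(αβ))`, then with
probability at least `1 − β` over the independent Laplace noises `Lap(2/(εn))`, every
released answer `a_x` satisfies `|a_x − c_x(D)| ≤ α`. -/
theorem point_sanitizer_accuracy {X : Type*} [Fintype X] [DecidableEq X] {n : ℕ}
    (hn : 0 < n) (D : Fin n → X) (α β ε : ℝ)
    (hα : 0 < α) (hβ : 0 < β) (hβ1 : β < 1) (hε : 0 < ε)
    (hsamp : (4 / (α * ε)) * Real.log (4 / (α * β)) ≤ (n : ℝ)) :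
    ENNReal.ofReal (1 - β) ≤
      Measure.pi (fun _ : X => laplaceMeasure (2 / (ε * n)))
        {ω : X → ℝ | ∀ x : X, |pointAnswer α D x ω - pointFreq D x| ≤ α} :=
  point_sanitizer_accuracy_general hn D α β ε hα hβ hε hsamp
end
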